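/- arXiv:1206.4177 — 8 statements merged into one kernel-verified Lean document; each statement's English description precedes it below -/
import Mathlib

section
/- Let M be a Γ-ring and δ: M → M a left derivation. Then [c,b]_β α δ(a) = aαcβδ(b) − cβaαδ(b) for all a, b, c ∈ M and α, β ∈ Γ. -/
/-- A Γ-ring in the sense of Barnes: additive abelian groups `M` and `Γ` with a
triadditive, associative product `M × Γ × M → M`. -/
structure GammaRing (M : Type*) (Γ : Type*) [AddCommGroup M] [AddCommGroup Γ] where
  tri : M → Γ → M → M
  add_left : ∀ (a b : M) (α : Γ) (c : M), tri (a + b) α c = tri a α c + tri b α c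
  add_mid : ∀ (a : M) (α β : Γ) (b : M), tri a (α + β) b = tri a α b + tri a β b
  add_right : ∀ (a : M) (α : Γ) (b c : M), tri a α (b + c) = tri a α b + tri a α c
  assoc : ∀ (a : M) (α : Γ) (b : M) (β : Γ) (c : M),
    tri (tri a α b) β c = tri a α (tri b β c)

namespace GammaRing

variable {M Γ : Type*} [AddCommGroup M] [AddCommGroup Γ]

/-- The commutator `[a,b]_α = aαb - bαa`. -/
def comm (G : GammaRing M Γ) (a : M) (α : Γ) (b : M) : M :=
  G.tri a α b - G.tri b α a

/-- The center `Z(M)`. -/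
def center (G : GammaRing M Γ) : Set M :=
  {a | ∀ (b : M) (α : Γ), G.tri a α b = G.tri b α a}

/-- A left derivation: additive with `δ(xαy) = xαδ(y) + yαδ(x)`. -/
def IsLeftDerivation (G : GammaRing M Γ) (δ : M → M) : Prop :=
  (∀ x y : M, δ (x + y) = δ x + δ y) ∧
  ∀ (x : M) (α : Γ) (y : M), δ (G.tri x α y) = G.tri x α (δ y) + G.tri y α (δ x)

/-- A derivation: additive with `μ(xαy) = μ(x)αy + xαμ(y)`. -/
def IsDerivation (G : GammaRing M Γ) (μ : M → M) : Prop :=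
  (∀ x y : M, μ (x + y) = μ x + μ y) ∧
  ∀ (x : M) (α : Γ) (y : M), μ (G.tri x α y) = G.tri (μ x) α y + G.tri x α (μ y)

/-- An endomorphism: additive with `σ(xαy) = σ(x)ασ(y)`. -/
def IsEndomorphism (G : GammaRing M Γ) (σ : M → M) : Prop :=
  (∀ x y : M, σ (x + y) = σ x + σ y) ∧
  ∀ (x : M) (α : Γ) (y : M), σ (G.tri x α y) = G.tri (σ x) α (σ y)

/-- Semiprime: `aΓMΓa = 0` implies `a = 0`. -/
def IsSemiprime (G : GammaRing M Γ) : Prop :=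
  ∀ a : M, (∀ (α : Γ) (m : M) (β : Γ), G.tri (G.tri a α m) β a = 0) → a = 0

/-- Prime: `aΓMΓb = 0` implies `a = 0` or `b = 0`. -/
def IsPrime (G : GammaRing M Γ) : Prop :=
  ∀ a b : M, (∀ (α : Γ) (m : M) (β : Γ), G.tri (G.tri a α m) β b = 0) → a = 0 ∨ b = 0

/-- Strong commutativity preserving: `[f(x),f(y)]_α = [x,y]_α`. -/
def IsSCP (G : GammaRing M Γ) (f : M → M) : Prop :=
  ∀ (x : M) (α : Γ) (y : M), G.comm (f x) α (f y) = G.comm x α y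

end GammaRing

/-- For a left derivation `δ` of a Γ-ring,
`[c,b]_β α δ(a) = aαcβδ(b) − cβaαδ(b)`. -/
theorem left_derivation_identity {M Γ : Type*} [AddCommGroup M] [AddCommGroup Γ]
    (G : GammaRing M Γ) (δ : M → M) (hδ : G.IsLeftDerivation δ) :
    ∀ (a b c : M) (α β : Γ),
      G.tri (G.comm c β b) α (δ a) =
        G.tri a α (G.tri c β (δ b)) - G.tri c β (G.tri a α (δ b)) := by
  intro a b c α β
  have sub_left : ∀ (x y : M) (γ : Γ) (z : M),
      G.tri (x - y) γ z = G.tri x γ z - G.tri y γ z := by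
    intro x y γ z
    have h := G.add_left (x - y) y γ z
    rw [sub_add_cancel] at h
    rw [eq_sub_iff_add_eq, ← h]
  have h1 := congrArg δ (G.assoc a α b β c)
  simp only [hδ.2] at h1
  simp only [G.add_right] at h1
  simp only [G.assoc] at h1
  rw [GammaRing.comm, sub_left]
  simp only [G.assoc]
  rw [← sub_eq_zero]
  have h0 := sub_eq_zero_of_eq h1
  rw [← h0]
  abel
end

section
/- Let M be a Γ-ring and d ∈ Z(M) an element of the center. Then dα[aβb, c]_γ = dα(aβ[b,c]_γ + [a,c]_γ β b) for all a, b, c ∈ M and α, β, γ ∈ Γ. -/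
section Aux
variable {M Γ : Type*} [AddCommGroup M] [AddCommGroup Γ] (G : GammaRing M Γ)

lemma GammaRing.hom_right (a : M) (α : Γ) :
    ∀ b c : M, G.tri a α (b - c) = G.tri a α b - G.tri a α c := by
  have h0 : G.tri a α 0 = 0 := by
    have := G.add_right a α 0 0
    simpa using this
  intro b c
  have h := G.add_right a α (b - c) c
  rw [sub_add_cancel] at h
  exact eq_sub_of_add_eq h.symm

lemma GammaRing.hom_left (α : Γ) (c : M) :
    ∀ a b : M, G.tri (a - b) α c = G.tri a α c - G.tri b α c := by
  have h0 : G.tri (0 : M) α c = 0 := by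
    have := G.add_left 0 0 α c
    simpa using this
  intro a b
  have h := G.add_left (a - b) b α c
  rw [sub_add_cancel] at h
  exact eq_sub_of_add_eq h.symm

lemma GammaRing.central_swap (d : M) (hd : d ∈ G.center) (a b c : M) (α β γ : Γ) :
    G.tri d α (G.tri a β (G.tri c γ b)) = G.tri d α (G.tri a γ (G.tri c β b)) := by
  calc G.tri d α (G.tri a β (G.tri c γ b))
      = G.tri (G.tri d α a) β (G.tri c γ b) := (G.assoc ..).symm
    _ = G.tri (G.tri a α d) β (G.tri c γ b) := by rw [hd a α]
    _ = G.tri a α (G.tri d β (G.tri c γ b)) := G.assoc ..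
    _ = G.tri a α (G.tri (G.tri d β c) γ b) := by rw [G.assoc]
    _ = G.tri a α (G.tri (G.tri c β d) γ b) := by rw [hd c β]
    _ = G.tri a α (G.tri c β (G.tri d γ b)) := by rw [G.assoc]
    _ = G.tri a α (G.tri c β (G.tri b γ d)) := by rw [hd b γ]
    _ = G.tri a α (G.tri (G.tri c β b) γ d) := by rw [G.assoc]
    _ = G.tri a α (G.tri d γ (G.tri c β b)) := by rw [hd (G.tri c β b) γ]
    _ = G.tri (G.tri a α d) γ (G.tri c β b) := (G.assoc ..).symm
    _ = G.tri (G.tri d α a) γ (G.tri c β b) := by rw [hd a α]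
    _ = G.tri d α (G.tri a γ (G.tri c β b)) := G.assoc ..

end Aux

/-- With a central element `d` in front, the commutator formula becomes neat:
`dα[aβb, c]_γ = dα(aβ[b,c]_γ + [a,c]_γ β b)`. -/
theorem central_commutator_formula {M Γ : Type*} [AddCommGroup M] [AddCommGroup Γ]
    (G : GammaRing M Γ) (d : M) (hd : d ∈ G.center) :
    ∀ (a b c : M) (α β γ : Γ),
      G.tri d α (G.comm (G.tri a β b) γ c) =
        G.tri d α (G.tri a β (G.comm b γ c) + G.tri (G.comm a γ c) β b) := by
  intro a b c α β γ
  simp only [GammaRing.comm, G.hom_right, G.hom_left, G.add_right, G.assoc]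
  rw [G.central_swap d hd a b c α β γ]
  abel
end

section
/- Let M be a semiprime Γ-ring and δ: M → M a left derivation. Then [c, [b,d]_γ]_β α δ(a) = 0 for all a, b, c, d ∈ M and α, β, γ ∈ Γ. -/
/-- In a semiprime Γ-ring with a left derivation `δ`,
`[c,[b,d]_γ]_β α δ(a) = 0`. -/
theorem semiprime_left_derivation_double_comm {M Γ : Type*}
    [AddCommGroup M] [AddCommGroup Γ] (G : GammaRing M Γ) (hsp : G.IsSemiprime)
    (δ : M → M) (hδ : G.IsLeftDerivation δ) :
    ∀ (a b c d : M) (α β γ : Γ),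
      G.tri (G.comm c β (G.comm b γ d)) α (δ a) = 0 := by
  obtain ⟨hadd, hmul⟩ := hδ
  intro a b c d α β γ
  -- basic subtraction lemmas
  have hsubL : ∀ (u v : M) (μ : Γ) (w : M),
      G.tri (u - v) μ w = G.tri u μ w - G.tri v μ w := by
    intro u v μ w
    have h := G.add_left (u - v) v μ w
    rw [sub_add_cancel] at h
    exact eq_sub_of_add_eq h.symm
  have hδsub : ∀ u v : M, δ (u - v) = δ u - δ v := by
    intro u v
    have h := hadd (u - v) v
    rw [sub_add_cancel] at h
    exact eq_sub_of_add_eq h.symm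
  have hzeroR : ∀ (u : M) (μ : Γ), G.tri u μ 0 = 0 := by
    intro u μ
    have h := G.add_right u μ 0 0
    rw [add_zero] at h
    exact left_eq_add.mp h
  -- the fundamental identity E(x,y,z,β,γ)
  have E : ∀ (x y z : M) (β' γ' : Γ),
      G.tri (G.tri x β' z) γ' (δ y) - G.tri (G.tri z γ' x) β' (δ y)
        + G.tri (G.comm y γ' z) β' (δ x) = 0 := by
    intro x y z β' γ'
    have h1 := hmul x β' (G.tri y γ' z)
    have h2 := hmul (G.tri x β' y) γ' z
    rw [G.assoc] at h2
    rw [hmul y γ' z] at h1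
    rw [hmul x β' y] at h2
    have h := h1.symm.trans h2
    rw [G.add_right, G.add_right, ← G.assoc, ← G.assoc, ← G.assoc, ← G.assoc] at h
    rw [GammaRing.comm, hsubL]
    abel_nf
    abel_nf at h
    linear_combination (norm := abel) h
  -- the cyclic consequence C : [y,x]_β γ δ(z) + [y,z]_γ β δ(x) = 0
  have C : ∀ (x y z : M) (β' γ' : Γ),
      G.tri (G.comm y β' x) γ' (δ z) + G.tri (G.comm y γ' z) β' (δ x) = 0 := by
    intro x y z β' γ'
    have e1 := E x y z β' γ'
    have e2 := E z y x γ' β'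
    linear_combination (norm := abel) e1 + e2
  -- δ kills commutators
  have hδcomm : δ (G.comm b γ d) = 0 := by
    rw [GammaRing.comm, hδsub, hmul, hmul]
    abel
  have hc := C (G.comm b γ d) c a β α
  rw [hδcomm, hzeroR] at hc
  linear_combination (norm := abel) hc
end

section
/- Let M be a semiprime Γ-ring and δ: M → M a left derivation. Then [c, [b,d]_γ]_β α m γ₁ δ(a) = 0 for all a, b, c, d, m ∈ M and α, β, γ, γ₁ ∈ Γ (that is, [c,[b,d]_γ]_β Γ M Γ δ(a) = 0). -/
section Aux

variable {M Γ : Type*} [AddCommGroup M] [AddCommGroup Γ]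

private lemma GR_zeroL (G : GammaRing M Γ) (α : Γ) (c : M) : G.tri 0 α c = 0 := by
  have h := G.add_left 0 0 α c
  rw [add_zero] at h
  have h2 : G.tri 0 α c + 0 = G.tri 0 α c + G.tri 0 α c := by rw [add_zero]; exact h
  exact (add_left_cancel h2).symm

private lemma GR_zeroR (G : GammaRing M Γ) (a : M) (α : Γ) : G.tri a α 0 = 0 := by
  have h := G.add_right a α 0 0
  rw [add_zero] at h
  have h2 : G.tri a α 0 + 0 = G.tri a α 0 + G.tri a α 0 := by rw [add_zero]; exact h
  exact (add_left_cancel h2).symm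

private lemma GR_subL (G : GammaRing M Γ) (a b : M) (α : Γ) (c : M) :
    G.tri (a - b) α c = G.tri a α c - G.tri b α c := by
  rw [eq_sub_iff_add_eq, ← G.add_left, sub_add_cancel]

private lemma GR_subR (G : GammaRing M Γ) (a : M) (α : Γ) (b c : M) :
    G.tri a α (b - c) = G.tri a α b - G.tri a α c := by
  rw [eq_sub_iff_add_eq, ← G.add_right, sub_add_cancel]

private lemma GR_dsub (G : GammaRing M Γ) (δ : M → M) (hδ : G.IsLeftDerivation δ)
    (u v : M) : δ (u - v) = δ u - δ v := by
  rw [eq_sub_iff_add_eq, ← hδ.1, sub_add_cancel]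

private lemma GR_dcomm (G : GammaRing M Γ) (δ : M → M) (hδ : G.IsLeftDerivation δ)
    (u : M) (γ : Γ) (v : M) : δ (G.comm u γ v) = 0 := by
  rw [GammaRing.comm, GR_dsub G δ hδ, hδ.2, hδ.2]
  abel

/-- The fundamental identity obtained by applying the left derivation to the two
associations of a triple product. -/
private lemma GR_F (G : GammaRing M Γ) (δ : M → M) (hδ : G.IsLeftDerivation δ)
    (z x y : M) (β α : Γ) :
    G.tri z β (G.tri x α (δ y)) + G.tri z β (G.tri y α (δ x)) =
      G.tri x α (G.tri z β (δ y)) + G.tri y β (G.tri z α (δ x)) := by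
  have h := congrArg δ (G.assoc x α y β z)
  rw [hδ.2, hδ.2, hδ.2, hδ.2] at h
  simp only [G.add_right, G.assoc] at h
  have h2 := sub_eq_zero_of_eq h
  rw [← sub_eq_zero, ← h2]
  abel

/-- An element with vanishing image under `δ` moves from the second slot to the
front, in front of a `δ`-tail. -/
private lemma GR_move (G : GammaRing M Γ) (δ : M → M) (hδ : G.IsLeftDerivation δ)
    (C : M) (hC : δ C = 0) (z : M) (β α : Γ) (y : M) :
    G.tri z β (G.tri C α (δ y)) = G.tri C α (G.tri z β (δ y)) := by
  have h := GR_F G δ hδ z C y β α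
  simp only [hC, GR_zeroR, add_zero] at h
  exact h

/-- A `δ`-annihilated element commutes past any element relative to a tied pair of
`Γ`-indices in front of a `δ`-tail. -/
private lemma GR_vac (G : GammaRing M Γ) (δ : M → M) (hδ : G.IsLeftDerivation δ)
    (C : M) (hC : δ C = 0) (x : M) (α : Γ) (u : M) :
    G.tri C α (G.tri x α (δ u)) = G.tri x α (G.tri C α (δ u)) := by
  have h2 := GR_F G δ hδ u x C α α
  simp only [hC, GR_zeroR, zero_add] at h2
  have h1 := GR_F G δ hδ C x u α α
  rw [h2] at h1
  exact add_right_cancel h1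

/-- The key identity: if `δ K = 0` (e.g. `K` a commutator), and `C = [c,K]_β`, then
`C α C α δ(a) = 0` identically. -/
private lemma GR_T2 (G : GammaRing M Γ) (δ : M → M) (hδ : G.IsLeftDerivation δ)
    (c K a : M) (β α : Γ) (hK : δ K = 0) :
    G.tri (G.comm c β K) α (G.tri (G.comm c β K) α (δ a)) = 0 := by
  calc G.tri (G.comm c β K) α (G.tri (G.comm c β K) α (δ a))
      = ((G.tri c β (G.tri (G.tri c α (G.tri K β a)) α (δ K)) + G.tri c β (G.tri K α (δ (G.tri c α (G.tri K β a))))) -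
        (G.tri (G.tri c α (G.tri K β a)) α (G.tri c β (δ K)) + G.tri K β (G.tri c α (δ (G.tri c α (G.tri K β a)))))) +
      ((G.tri K β (G.tri (G.tri c α c) α (δ (G.tri a β K))) + G.tri (G.tri a β K) α (G.tri (G.tri c α c) β (δ K))) -
        (G.tri (G.tri c α c) α (G.tri K β (δ (G.tri a β K))) + G.tri (G.tri c α c) α (G.tri (G.tri a β K) β (δ K)))) +
      ((G.tri (G.tri c α c) β (G.tri K β (δ (G.tri a α K))) + G.tri (G.tri c α c) β (G.tri (G.tri a α K) β (δ K))) -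
        (G.tri K β (G.tri (G.tri c α c) β (δ (G.tri a α K))) + G.tri (G.tri a α K) β (G.tri (G.tri c α c) β (δ K)))) +
      ((G.tri (G.tri c β c) β (G.tri (G.tri K α a) α (δ K)) + G.tri (G.tri c β c) β (G.tri K α (δ (G.tri K α a)))) -
        (G.tri (G.tri K α a) α (G.tri (G.tri c β c) β (δ K)) + G.tri K β (G.tri (G.tri c β c) α (δ (G.tri K α a))))) +
      ((G.tri (G.tri c α c) α (G.tri (G.tri K β a) β (δ K)) + G.tri (G.tri c α c) α (G.tri K β (δ (G.tri K β a)))) -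
        (G.tri (G.tri K β a) β (G.tri (G.tri c α c) α (δ K)) + G.tri K α (G.tri (G.tri c α c) β (δ (G.tri K β a))))) +
      (G.tri c β (G.tri K α (G.tri c β (δ (G.tri a α K))) + G.tri (G.tri a α K) β (G.tri c α (δ K))) -
        G.tri c β (G.tri c β (G.tri K α (δ (G.tri a α K))) + G.tri c β (G.tri (G.tri a α K) α (δ K)))) +
      (G.tri c α (G.tri K β (G.tri c β (δ (G.tri a α K))) + G.tri (G.tri a α K) β (G.tri c β (δ K))) -
        G.tri c α (G.tri c β (G.tri K β (δ (G.tri a α K))) + G.tri c β (G.tri (G.tri a α K) β (δ K)))) +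
      ((G.tri c α (G.tri (G.tri c α a) β (δ (G.tri K β K))) + G.tri c α (G.tri (G.tri K β K) β (δ (G.tri c α a)))) -
        (G.tri (G.tri c α a) β (G.tri c α (δ (G.tri K β K))) + G.tri (G.tri K β K) α (G.tri c β (δ (G.tri c α a))))) +
      ((G.tri a α (G.tri (G.tri c α c) β (δ (G.tri K β K))) + G.tri (G.tri K β K) β (G.tri (G.tri c α c) α (δ a))) -
        (G.tri (G.tri c α c) β (G.tri a α (δ (G.tri K β K))) + G.tri (G.tri c α c) β (G.tri (G.tri K β K) α (δ a)))) +
      ((G.tri a β (G.tri (G.tri c β c) α (δ (G.tri K α K))) + G.tri (G.tri K α K) α (G.tri (G.tri c β c) β (δ a))) -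
        (G.tri (G.tri c β c) α (G.tri a β (δ (G.tri K α K))) + G.tri (G.tri c β c) α (G.tri (G.tri K α K) β (δ a)))) +
      (G.tri c α (G.tri c β (G.tri a α (δ (G.tri K β K))) + G.tri c β (G.tri (G.tri K β K) α (δ a))) -
        G.tri c α (G.tri a α (G.tri c β (δ (G.tri K β K))) + G.tri (G.tri K β K) β (G.tri c α (δ a)))) +
      (G.tri c β (G.tri c α (G.tri a β (δ (G.tri K α K))) + G.tri c α (G.tri (G.tri K α K) β (δ a))) -
        G.tri c β (G.tri a β (G.tri c α (δ (G.tri K α K))) + G.tri (G.tri K α K) α (G.tri c β (δ a)))) +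
      ((G.tri K β (G.tri c α (δ (G.tri K β (G.tri c α a)))) + G.tri (G.tri K β (G.tri c α a)) α (G.tri c β (δ K))) -
        (G.tri c α (G.tri K β (δ (G.tri K β (G.tri c α a)))) + G.tri c α (G.tri (G.tri K β (G.tri c α a)) β (δ K)))) +
      ((G.tri K α (G.tri c β (δ (G.tri K β (G.tri c α a)))) + G.tri (G.tri K β (G.tri c α a)) β (G.tri c α (δ K))) -
        (G.tri c β (G.tri K α (δ (G.tri K β (G.tri c α a)))) + G.tri c β (G.tri (G.tri K β (G.tri c α a)) α (δ K)))) +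
      ((G.tri (G.tri K β K) α (G.tri c β (δ (G.tri c α a))) + G.tri (G.tri c α a) β (G.tri c α (δ (G.tri K β K)))) -
        (G.tri c β (G.tri (G.tri K β K) α (δ (G.tri c α a))) + G.tri c β (G.tri (G.tri c α a) α (δ (G.tri K β K))))) +
      ((G.tri c α (G.tri (G.tri K β (G.tri K β c)) α (δ a)) + G.tri c α (G.tri a α (δ (G.tri K β (G.tri K β c))))) -
        (G.tri (G.tri K β (G.tri K β c)) α (G.tri c α (δ a)) + G.tri a α (G.tri c α (δ (G.tri K β (G.tri K β c)))))) +
      ((G.tri c β (G.tri (G.tri K α (G.tri K α c)) β (δ a)) + G.tri c β (G.tri a β (δ (G.tri K α (G.tri K α c))))) -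
        (G.tri (G.tri K α (G.tri K α c)) β (G.tri c β (δ a)) + G.tri a β (G.tri c β (δ (G.tri K α (G.tri K α c)))))) +
      ((G.tri (G.tri c β K) β (G.tri K α (δ (G.tri c α a))) + G.tri (G.tri c β K) β (G.tri (G.tri c α a) α (δ K))) -
        (G.tri K α (G.tri (G.tri c β K) β (δ (G.tri c α a))) + G.tri (G.tri c α a) β (G.tri (G.tri c β K) α (δ K)))) +
      ((G.tri (G.tri K α c) α (G.tri (G.tri c β K) β (δ a)) + G.tri a β (G.tri (G.tri c β K) α (δ (G.tri K α c)))) -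
        (G.tri (G.tri c β K) β (G.tri (G.tri K α c) α (δ a)) + G.tri (G.tri c β K) β (G.tri a α (δ (G.tri K α c))))) +
      ((G.tri (G.tri K β c) β (G.tri (G.tri c α K) α (δ a)) + G.tri a α (G.tri (G.tri c α K) β (δ (G.tri K β c)))) -
        (G.tri (G.tri c α K) α (G.tri (G.tri K β c) β (δ a)) + G.tri (G.tri c α K) α (G.tri a β (δ (G.tri K β c))))) +
      (G.tri c β (G.tri K β (G.tri (G.tri K α c) α (δ a)) + G.tri K β (G.tri a α (δ (G.tri K α c)))) -
        G.tri c β (G.tri (G.tri K α c) α (G.tri K β (δ a)) + G.tri a β (G.tri K α (δ (G.tri K α c))))) +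
      (G.tri c α (G.tri K α (G.tri (G.tri K β c) β (δ a)) + G.tri K α (G.tri a β (δ (G.tri K β c)))) -
        G.tri c α (G.tri (G.tri K β c) β (G.tri K α (δ a)) + G.tri a α (G.tri K β (δ (G.tri K β c))))) := by
        simp only [GammaRing.comm, hδ.2, hK, GR_subL, GR_subR, G.add_right, G.assoc,
          GR_zeroL, GR_zeroR]
        abel
    _ = 0 := by
        rw [GR_F G δ hδ c (G.tri c α (G.tri K β a)) K β α,
          GR_F G δ hδ (G.tri c α c) K (G.tri a β K) α β,
          GR_F G δ hδ (G.tri c α c) K (G.tri a α K) β β,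
          GR_F G δ hδ (G.tri c β c) (G.tri K α a) K β α,
          GR_F G δ hδ (G.tri c α c) (G.tri K β a) K α β,
          GR_F G δ hδ c K (G.tri a α K) β α,
          GR_F G δ hδ c K (G.tri a α K) β β,
          GR_F G δ hδ c (G.tri c α a) (G.tri K β K) α β,
          GR_F G δ hδ (G.tri c α c) a (G.tri K β K) β α,
          GR_F G δ hδ (G.tri c β c) a (G.tri K α K) α β,
          GR_F G δ hδ c a (G.tri K β K) β α,
          GR_F G δ hδ c a (G.tri K α K) α β,
          GR_F G δ hδ c K (G.tri K β (G.tri c α a)) α β,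
          GR_F G δ hδ c K (G.tri K β (G.tri c α a)) β α,
          GR_F G δ hδ c (G.tri K β K) (G.tri c α a) β α,
          GR_F G δ hδ c (G.tri K β (G.tri K β c)) a α α,
          GR_F G δ hδ c (G.tri K α (G.tri K α c)) a β β,
          GR_F G δ hδ (G.tri c β K) K (G.tri c α a) β α,
          GR_F G δ hδ (G.tri c β K) (G.tri K α c) a β α,
          GR_F G δ hδ (G.tri c α K) (G.tri K β c) a α β,
          GR_F G δ hδ K (G.tri K α c) a β α,
          GR_F G δ hδ K (G.tri K β c) a α β]
        abel

end Aux

/-- In a semiprime Γ-ring with a left derivation `δ`,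
`[c,[b,d]_γ]_β Γ M Γ δ(a) = 0`. -/
theorem semiprime_left_derivation_double_comm_sandwich {M Γ : Type*}
    [AddCommGroup M] [AddCommGroup Γ] (G : GammaRing M Γ) (hsp : G.IsSemiprime)
    (δ : M → M) (hδ : G.IsLeftDerivation δ) :
    ∀ (a b c d m : M) (α β γ γ₁ : Γ),
      G.tri (G.tri (G.comm c β (G.comm b γ d)) α m) γ₁ (δ a) = 0 := by
  intro a b c d m α β γ γ₁
  set C : M := G.comm c β (G.comm b γ d) with hCdef
  have hK : δ (G.comm b γ d) = 0 := GR_dcomm G δ hδ b γ d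
  have hC : δ C = 0 := GR_dcomm G δ hδ c β (G.comm b γ d)
  have hT2 : ∀ a' : M, G.tri C α (G.tri C α (δ a')) = 0 := fun a' =>
    GR_T2 G δ hδ c (G.comm b γ d) a' β α hK
  have hv : G.tri C α (δ a) = 0 := by
    apply hsp
    intro θ n φ
    calc G.tri (G.tri (G.tri C α (δ a)) θ n) φ (G.tri C α (δ a))
        = G.tri C α (G.tri (G.tri (δ a) θ (G.tri n φ C)) α (δ a)) := by
          simp only [G.assoc]
      _ = G.tri (G.tri (δ a) θ (G.tri n φ C)) α (G.tri C α (δ a)) :=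
          GR_vac G δ hδ C hC _ α a
      _ = G.tri (δ a) θ (G.tri n φ (G.tri C α (G.tri C α (δ a)))) := by
          simp only [G.assoc]
      _ = 0 := by rw [hT2 a, GR_zeroR, GR_zeroR]
  calc G.tri (G.tri C α m) γ₁ (δ a)
      = G.tri m γ₁ (G.tri C α (δ a)) := by
        rw [G.assoc, ← GR_move G δ hδ C hC m γ₁ α a]
    _ = 0 := by rw [hv, GR_zeroR]
end

section
/- Let M be a semiprime Γ-ring and δ: M → M a left derivation. Then [δ(a), b]_γ lies in the center Z(M) for all a, b ∈ M and γ ∈ Γ. -/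
section Aux

variable {M Γ : Type*} [AddCommGroup M] [AddCommGroup Γ]
variable (G : GammaRing M Γ) (δ : M → M)

private lemma grZeroL (α : Γ) (c : M) : G.tri 0 α c = 0 := by
  have h := G.add_left 0 0 α c
  rw [add_zero] at h
  have h2 : G.tri 0 α c + G.tri 0 α c = G.tri 0 α c + 0 := by
    rw [add_zero]; exact h.symm
  exact add_left_cancel h2

private lemma grZeroR (a : M) (α : Γ) : G.tri a α 0 = 0 := by
  have h := G.add_right a α 0 0
  rw [add_zero] at h
  have h2 : G.tri a α 0 + G.tri a α 0 = G.tri a α 0 + 0 := by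
    rw [add_zero]; exact h.symm
  exact add_left_cancel h2

private lemma grSubL (a b : M) (α : Γ) (c : M) :
    G.tri (a - b) α c = G.tri a α c - G.tri b α c := by
  have h := G.add_left (a - b) b α c
  rw [sub_add_cancel] at h
  exact eq_sub_of_add_eq h.symm

private lemma grSubR (a : M) (α : Γ) (b c : M) :
    G.tri a α (b - c) = G.tri a α b - G.tri a α c := by
  have h := G.add_right a α (b - c) c
  rw [sub_add_cancel] at h
  exact eq_sub_of_add_eq h.symm

private lemma grEq1 (hδ : G.IsLeftDerivation δ) (x y z : M) (α β : Γ) :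
    G.tri z β (G.tri x α (δ y)) + G.tri z β (G.tri y α (δ x))
      = G.tri x α (G.tri z β (δ y)) + G.tri y β (G.tri z α (δ x)) := by
  have h1 := hδ.2 (G.tri x α y) β z
  have h2 := hδ.2 x α (G.tri y β z)
  rw [G.assoc] at h1
  rw [G.assoc] at h1
  rw [hδ.2 x α y, G.add_right] at h1
  rw [hδ.2 y β z, G.add_right, G.assoc] at h2
  have h := h1.symm.trans h2
  rw [← sub_eq_zero] at h
  rw [← sub_eq_zero]
  rw [← h]
  abel

private lemma grA (hδ : G.IsLeftDerivation δ) (y x : M) (β α : Γ) :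
    G.tri y β (G.tri x α (δ y)) = G.tri x α (G.tri y β (δ y)) := by
  have h := grEq1 G δ hδ x y y α β
  exact add_right_cancel h

private lemma grA2 (hδ : G.IsLeftDerivation δ) (y : M) (β : Γ) (x : M) (α : Γ) (z : M) (τ : Γ) :
    G.tri y β (G.tri x α (G.tri z τ (δ y)))
      = G.tri x α (G.tri y β (G.tri z τ (δ y))) := by
  have h1 := grA G δ hδ y (G.tri x α z) β τ
  simp only [G.assoc] at h1
  have h2 := grA G δ hδ y z β τ
  rw [← h2] at h1
  exact h1

private lemma grLin (hδ : G.IsLeftDerivation δ) (y w x z : M) (β α τ : Γ) :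
    G.tri y β (G.tri x α (G.tri z τ (δ w))) - G.tri x α (G.tri y β (G.tri z τ (δ w)))
      = G.tri x α (G.tri w β (G.tri z τ (δ y)))
        - G.tri w β (G.tri x α (G.tri z τ (δ y))) := by
  have h := grA2 G δ hδ (y + w) β x α z τ
  rw [hδ.1] at h
  simp only [G.add_left, G.add_right] at h
  have h1 := grA2 G δ hδ y β x α z τ
  have h2 := grA2 G δ hδ w β x α z τ
  rw [h1, h2] at h
  rw [← sub_eq_zero] at h
  rw [← sub_eq_zero]
  rw [← h]
  abel

/-- C1 : after a `δ y` prefix, a `y`-block floats. -/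
private lemma grC1 (hδ : G.IsLeftDerivation δ) (hsp : G.IsSemiprime) (y : M) (μ β : Γ) (x : M) (α : Γ) (v : M) :
    G.tri (δ y) μ (G.tri y β (G.tri x α v))
      = G.tri (δ y) μ (G.tri x α (G.tri y β v)) := by
  rw [← sub_eq_zero, ← grSubR]
  refine hsp _ fun ρ m σ => ?_
  set K := G.tri y β (G.tri x α v) - G.tri x α (G.tri y β v) with hK
  have hJ : G.tri (G.tri K ρ m) σ (δ y) = 0 := by
    rw [hK]
    simp only [grSubL, G.assoc]
    have h := grA2 G δ hδ y β x α (G.tri v ρ m) σ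
    simp only [G.assoc] at h
    rw [h, sub_self]
  calc G.tri (G.tri (G.tri (δ y) μ K) ρ m) σ (G.tri (δ y) μ K)
      = G.tri (δ y) μ (G.tri K ρ (G.tri m σ (G.tri (δ y) μ K))) := by
        rw [G.assoc, G.assoc]
    _ = G.tri (δ y) μ (G.tri (G.tri (G.tri K ρ m) σ (δ y)) μ K) := by
        rw [G.assoc, G.assoc]
    _ = 0 := by rw [hJ, grZeroL, grZeroR]

/-- C2 : commutator-type block swap in front of words `· zσ(δw)`. -/
private lemma grC2 (hδ : G.IsLeftDerivation δ) (hsp : G.IsSemiprime) (y : M) (β : Γ) (x : M) (α : Γ) (z : M) (σ : Γ) (w : M) :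
    G.tri y β (G.tri x α (G.tri z σ (δ w)))
      = G.tri x α (G.tri y β (G.tri z σ (δ w))) := by
  rw [← sub_eq_zero]
  refine hsp _ fun ρ m τ => ?_
  have hpq := grLin G δ hδ y w x z β α σ
  have main : ∀ R : M,
      G.tri R τ (G.tri y β (G.tri x α (G.tri z σ (δ w)))
        - G.tri x α (G.tri y β (G.tri z σ (δ w))))
      = G.tri R τ (G.tri x α (G.tri w β (G.tri z σ (δ y)))
        - G.tri w β (G.tri x α (G.tri z σ (δ y)))) :=
    fun R => congrArg _ hpq
  rw [main]
  simp only [grSubL, grSubR, G.assoc]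
  have r1 := grC1 G δ hδ hsp w ρ β (G.tri m τ x) α (G.tri z σ (δ y))
  simp only [G.assoc] at r1
  have r2 := grC1 G δ hδ hsp w ρ β m τ (G.tri x α (G.tri z σ (δ y)))
  have hI := r1.symm.trans r2
  rw [hI]
  abel

/-- C3 : after a `(δ w, μ)` block, adjacent blocks swap. -/
private lemma grC3 (hδ : G.IsLeftDerivation δ) (hsp : G.IsSemiprime) (w : M) (μ : Γ) (x : M) (α : Γ) (y : M) (β : Γ) (v : M) :
    G.tri (δ w) μ (G.tri x α (G.tri y β v))
      = G.tri (δ w) μ (G.tri y β (G.tri x α v)) := by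
  rw [← sub_eq_zero, ← grSubR]
  refine hsp _ fun ρ m σ => ?_
  set K := G.tri x α (G.tri y β v) - G.tri y β (G.tri x α v) with hK
  have hJ : G.tri (G.tri K ρ m) σ (δ w) = 0 := by
    rw [hK]
    simp only [grSubL, G.assoc]
    have h := grC2 G δ hδ hsp y β x α (G.tri v ρ m) σ
    simp only [G.assoc] at h
    rw [← h, sub_self]
  calc G.tri (G.tri (G.tri (δ w) μ K) ρ m) σ (G.tri (δ w) μ K)
      = G.tri (δ w) μ (G.tri K ρ (G.tri m σ (G.tri (δ w) μ K))) := by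
        rw [G.assoc, G.assoc]
    _ = G.tri (δ w) μ (G.tri (G.tri (G.tri K ρ m) σ (δ w)) μ K) := by
        rw [G.assoc, G.assoc]
    _ = 0 := by rw [hJ, grZeroL, grZeroR]

/-- C4 : in words ending in `δ w`, adjacent leading blocks swap. -/
private lemma grC4 (hδ : G.IsLeftDerivation δ) (hsp : G.IsSemiprime) (y : M) (β : Γ) (x : M) (α : Γ) (w : M) :
    G.tri y β (G.tri x α (δ w)) = G.tri x α (G.tri y β (δ w)) := by
  rw [← sub_eq_zero]
  refine hsp _ fun ρ m σ => ?_
  simp only [grSubL, grSubR, G.assoc]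
  have n1 := grC3 G δ hδ hsp w ρ (G.tri m σ x) α y β (δ w)
  simp only [G.assoc] at n1
  have n2 := grC3 G δ hδ hsp w ρ y β m σ (G.tri x α (δ w))
  have hI := n1.trans n2
  rw [hI]
  abel

/-- C5 : a `δ`-block floats (with its own γ) past any block. -/
private lemma grC5 (hδ : G.IsLeftDerivation δ) (hsp : G.IsSemiprime) (w : M) (α : Γ) (x : M) (β : Γ) (v : M) :
    G.tri (δ w) α (G.tri x β v) = G.tri x β (G.tri (δ w) α v) := by
  rw [← sub_eq_zero]
  refine hsp _ fun ρ m σ => ?_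
  simp only [grSubL, grSubR, G.assoc]
  have c11 := grC3 G δ hδ hsp w α (G.tri x β (G.tri v ρ (G.tri m σ (δ w)))) α x β v
  simp only [G.assoc] at c11
  have c12 := grC3 G δ hδ hsp w α (G.tri x β (G.tri v ρ m)) σ x β (G.tri (δ w) α v)
  simp only [G.assoc] at c12
  have c21 := grC3 G δ hδ hsp w α (G.tri v ρ (G.tri m σ (δ w))) α x β v
  simp only [G.assoc] at c21
  have c22 := grC3 G δ hδ hsp w α (G.tri v ρ m) σ x β (G.tri (δ w) α v)
  simp only [G.assoc] at c22
  rw [c11, c12, c21, c22]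
  abel

/-- G1 : swap two leading blocks keeping their γ's in place, in words ending `δ x`. -/
private lemma grG1 (hδ : G.IsLeftDerivation δ) (hsp : G.IsSemiprime) (z y x : M) (β α : Γ) :
    G.tri z β (G.tri y α (δ x)) = G.tri y β (G.tri z α (δ x)) := by
  have h := grEq1 G δ hδ x y z α β
  rw [grC4 G δ hδ hsp z β x α y] at h
  exact add_left_cancel h

private lemma grG1ctx (hδ : G.IsLeftDerivation δ) (hsp : G.IsSemiprime) (z : M) (β : Γ) (y : M) (α : Γ) (x : M) (ρ : Γ) (W : M) :
    G.tri z β (G.tri y α (G.tri (δ x) ρ W))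
      = G.tri y β (G.tri z α (G.tri (δ x) ρ W)) := by
  have h : G.tri (G.tri z β (G.tri y α (δ x))) ρ W
      = G.tri (G.tri y β (G.tri z α (δ x))) ρ W := by
    rw [grG1 G δ hδ hsp z y x β α]
  simp only [G.assoc] at h
  exact h

private lemma grKey9 (hδ : G.IsLeftDerivation δ) (hsp : G.IsSemiprime) (a b : M) (γ μ τ η ρ σ : Γ) (v m : M) :
    G.tri (δ a) γ (G.tri b μ (G.tri v ρ (G.tri m σ (G.tri (δ a) τ (G.tri b η v)))))
      = G.tri (δ a) μ (G.tri b γ (G.tri v ρ (G.tri m σ (G.tri (δ a) τ (G.tri b η v))))) := by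
  have m1 := grC3 G δ hδ hsp a γ (G.tri b μ (G.tri v ρ m)) σ (δ a) τ (G.tri b η v)
  simp only [G.assoc] at m1
  have m2 := grC3 G δ hδ hsp a γ (δ a) τ b μ (G.tri v ρ (G.tri m σ (G.tri b η v)))
  have m3 := grG1ctx G δ hδ hsp (δ a) γ b μ a τ (G.tri v ρ (G.tri m σ (G.tri b η v)))
  have m4 := grC5 G δ hδ hsp a μ b γ (G.tri (δ a) τ (G.tri v ρ (G.tri m σ (G.tri b η v))))
  have m5 := grC3 G δ hδ hsp a μ b γ (δ a) τ (G.tri v ρ (G.tri m σ (G.tri b η v)))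
  have m6 := grC3 G δ hδ hsp a μ (δ a) τ (G.tri b γ (G.tri v ρ m)) σ (G.tri b η v)
  simp only [G.assoc] at m6
  exact m1.trans (m2.trans (m3.trans (m4.symm.trans (m5.trans m6))))

/-- Z : the two γ's attached to a leading `(δ a) · b ·` pair can be swapped. -/
private lemma grKeyZ (hδ : G.IsLeftDerivation δ) (hsp : G.IsSemiprime) (a b : M) (γ μ : Γ) (v : M) :
    G.tri (δ a) γ (G.tri b μ v) = G.tri (δ a) μ (G.tri b γ v) := by
  rw [← sub_eq_zero]
  refine hsp _ fun ρ m σ => ?_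
  simp only [grSubL, grSubR, G.assoc]
  rw [grKey9 G δ hδ hsp a b γ μ γ μ ρ σ v m,
    grKey9 G δ hδ hsp a b γ μ μ γ ρ σ v m]
  abel

private lemma grCentral (hδ : G.IsLeftDerivation δ) (hsp : G.IsSemiprime) (a b : M) (γ : Γ) :
    G.tri (δ a) γ b - G.tri b γ (δ a) = 0 := by
  refine hsp _ fun ρ m σ => ?_
  simp only [grSubL, grSubR, G.assoc]
  have h3 := grC5 G δ hδ hsp a ρ b γ (G.tri m σ (G.tri (δ a) γ b))
  have h4 := grC5 G δ hδ hsp a ρ b γ (G.tri m σ (G.tri b γ (δ a)))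
  rw [← h3, ← h4,
    grKeyZ G δ hδ hsp a b γ ρ (G.tri m σ (G.tri (δ a) γ b)),
    grKeyZ G δ hδ hsp a b γ ρ (G.tri m σ (G.tri b γ (δ a)))]
  abel

end Aux

/-- In a semiprime Γ-ring with a left derivation `δ`, every commutator
`[δ(a),b]_γ` is central. -/
theorem semiprime_left_derivation_comm_central {M Γ : Type*}
    [AddCommGroup M] [AddCommGroup Γ] (G : GammaRing M Γ) (hsp : G.IsSemiprime)
    (δ : M → M) (hδ : G.IsLeftDerivation δ) :
    ∀ (a b : M) (γ : Γ), G.comm (δ a) γ b ∈ G.center := by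
  intro a b γ
  have hc : G.comm (δ a) γ b = 0 := grCentral G δ hδ hsp a b γ
  rw [hc]
  exact fun b' α' => by rw [grZeroL, grZeroR]
end

section
/- Every left derivation δ of a semiprime Γ-ring M maps M into its center Z(M); that is, δ(a) ∈ Z(M) for all a ∈ M. -/
/-!
Expanding `δ((aαb)βz) = δ(aα(bβz))` with the left Leibniz rule in two ways gives a
three-variable identity; specialising and polarising it shows `[u,x]_γ Γ M Γ δx = 0`.
In a semiprime Γ-ring the relation `a Γ M Γ b = 0` is symmetric, and this lets one
linearise to `[u,x]_γ Γ M Γ δw = 0` for all `w`. For `c = [δa,b]_α` this gives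
`c Γ M Γ δa = 0`, hence `c Γ M Γ c = 0`, so `c = 0`.
-/

namespace GammaRing

variable {M Γ : Type*} [AddCommGroup M] [AddCommGroup Γ] (G : GammaRing M Γ)

theorem tri_zero_left (α : Γ) (c : M) : G.tri 0 α c = 0 :=
  (AddMonoidHom.mk' (G.tri · α c) fun a b => G.add_left a b α c).map_zero

theorem tri_zero_right (a : M) (α : Γ) : G.tri a α 0 = 0 :=
  (AddMonoidHom.mk' (G.tri a α) (G.add_right a α)).map_zero

theorem tri_neg_left (a : M) (α : Γ) (c : M) : G.tri (-a) α c = -G.tri a α c :=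
  (AddMonoidHom.mk' (G.tri · α c) fun a b => G.add_left a b α c).map_neg a

theorem tri_sub_left (a b : M) (α : Γ) (c : M) :
    G.tri (a - b) α c = G.tri a α c - G.tri b α c :=
  (AddMonoidHom.mk' (G.tri · α c) fun a b => G.add_left a b α c).map_sub a b

theorem tri_sub_right (a : M) (α : Γ) (b c : M) :
    G.tri a α (b - c) = G.tri a α b - G.tri a α c :=
  (AddMonoidHom.mk' (G.tri a α) (G.add_right a α)).map_sub b c

theorem comm_add_right (a : M) (α : Γ) (b c : M) :
    G.comm a α (b + c) = G.comm a α b + G.comm a α c := by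
  simp only [comm, G.add_left, G.add_right]
  abel

/-- `a Γ M Γ b = 0`. -/
def Annihilates (a b : M) : Prop :=
  ∀ (ρ : Γ) (m : M) (τ : Γ), G.tri (G.tri a ρ m) τ b = 0

variable {G}

namespace Annihilates

variable {a b : M}

theorem tri_left (h : G.Annihilates a b) (c : M) (α : Γ) : G.Annihilates (G.tri c α a) b := by
  intro ρ m τ
  rw [G.assoc, G.assoc, ← G.assoc a, h, G.tri_zero_right]

theorem tri_right (h : G.Annihilates a b) (α : Γ) (c : M) : G.Annihilates a (G.tri b α c) := by
  intro ρ m τ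
  rw [← G.assoc, h, G.tri_zero_left]

theorem right_tri (h : G.Annihilates a b) (c : M) (α : Γ) : G.Annihilates a (G.tri c α b) := by
  intro ρ m τ
  rw [← G.assoc, G.assoc a, h]

theorem comm_right (h : G.Annihilates a b) (α : Γ) (c : M) : G.Annihilates a (G.comm b α c) := by
  intro ρ m τ
  rw [comm, tri_sub_right, h.tri_right, h.right_tri, sub_self]

end Annihilates

namespace IsSemiprime

theorem annihilates_symm (hG : G.IsSemiprime) {a b : M} (h : G.Annihilates a b) :
    G.Annihilates b a := by
  intro ρ m τ
  exact hG _ (((h.tri_left (G.tri b ρ m) τ).tri_right ρ m).tri_right τ a)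

theorem annihilates_of_forall_annihilates (hG : G.IsSemiprime) (f g : M →+ M)
    (h : ∀ x, G.Annihilates (f x) (g x)) (x w : M) : G.Annihilates (f x) (g w) := by
  intro ρ v σ
  have hcross : G.tri (G.tri (f x) ρ v) σ (g w) = -G.tri (G.tri (f w) ρ v) σ (g x) := by
    have hsum := h (x + w) ρ v σ
    simp only [map_add, G.add_left, G.add_right, h x ρ v σ, h w ρ v σ, zero_add,
      add_zero] at hsum
    exact eq_neg_of_add_eq_zero_left hsum
  apply hG
  intro π n κ
  have hann := ((hG.annihilates_symm (h x)).tri_left (G.tri (f w) ρ v) σ).tri_right ρ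
    (G.tri v σ (g w))
  nth_rw 1 [hcross]
  rw [tri_neg_left, tri_neg_left, G.assoc (f x) ρ v, hann, neg_zero]

end IsSemiprime

namespace IsLeftDerivation

variable {δ : M → M}

theorem tri_tri_add_tri_tri (hδ : G.IsLeftDerivation δ) (a b z : M) (α β : Γ) :
    G.tri a α (G.tri z β (δ b)) + G.tri b β (G.tri z α (δ a)) =
      G.tri z β (G.tri a α (δ b)) + G.tri z β (G.tri b α (δ a)) := by
  have h := congrArg δ (G.assoc a α b β z)
  -- reassociating before expanding would turn `h` into `True`
  simp only [hδ.2] at h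
  simp only [G.add_right, G.assoc] at h
  linear_combination (norm := abel) -h

theorem tri_tri_self (hδ : G.IsLeftDerivation δ) (m x : M) (ρ σ : Γ) :
    G.tri m ρ (G.tri x σ (δ x)) = G.tri x σ (G.tri m ρ (δ x)) := by
  linear_combination (norm := abel) hδ.tri_tri_add_tri_tri m x x ρ σ

theorem tri_tri_self_polarized (hδ : G.IsLeftDerivation δ) (m x y : M) (ρ σ : Γ) :
    G.tri m ρ (G.tri x σ (δ y)) + G.tri m ρ (G.tri y σ (δ x)) =
      G.tri x σ (G.tri m ρ (δ y)) + G.tri y σ (G.tri m ρ (δ x)) := by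
  have h := hδ.tri_tri_self m (x + y) ρ σ
  simp only [hδ.1, G.add_left, G.add_right] at h
  linear_combination (norm := abel) h - hδ.tri_tri_self m x ρ σ - hδ.tri_tri_self m y ρ σ

theorem tri_tri_tri_self (hδ : G.IsLeftDerivation δ) (u x v : M) (γ ρ σ : Γ) :
    G.tri u γ (G.tri x ρ (G.tri v σ (δ x))) = G.tri x γ (G.tri u ρ (G.tri v σ (δ x))) := by
  have h₁ := hδ.tri_tri_add_tri_tri x u (G.tri v σ x) ρ γ
  have h₂ := hδ.tri_tri_self_polarized (G.tri v σ x) x u γ ρ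
  simp only [G.assoc] at h₁ h₂
  rw [← hδ.tri_tri_self v x σ ρ, ← G.assoc u ρ v, ← hδ.tri_tri_self (G.tri u ρ v) x σ γ,
    G.assoc]
  linear_combination (norm := abel) h₁ + h₂

theorem annihilates_comm_self (hδ : G.IsLeftDerivation δ) (u : M) (γ : Γ) (x : M) :
    G.Annihilates (G.comm u γ x) (δ x) := by
  intro ρ v σ
  simp only [comm, tri_sub_left, G.assoc]
  rw [hδ.tri_tri_tri_self, sub_self]

theorem annihilates_comm (hδ : G.IsLeftDerivation δ) (hG : G.IsSemiprime) (u : M) (γ : Γ)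
    (x w : M) : G.Annihilates (G.comm u γ x) (δ w) :=
  hG.annihilates_of_forall_annihilates (AddMonoidHom.mk' (G.comm u γ) (G.comm_add_right u γ))
    (AddMonoidHom.mk' δ hδ.1) (hδ.annihilates_comm_self u γ) x w

end IsLeftDerivation

end GammaRing

/-- A left derivation of a semiprime Γ-ring maps into the center. -/
theorem semiprime_left_derivation_maps_to_center {M Γ : Type*}
    [AddCommGroup M] [AddCommGroup Γ] (G : GammaRing M Γ) (hsp : G.IsSemiprime)
    (δ : M → M) (hδ : G.IsLeftDerivation δ) :
    ∀ a : M, δ a ∈ G.center := by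
  intro a b α
  have hann := (hδ.annihilates_comm hsp (δ a) α b a).comm_right α b
  exact sub_eq_zero.mp (hsp _ hann)
end

section
/- Let M be a semiprime Γ-ring and μ: M → M a strong commutativity preserving derivation. Then [x,y]_α α z = 0 for all x, y, z ∈ M and α ∈ Γ. -/
namespace GammaRing

variable {M Γ : Type*} [AddCommGroup M] [AddCommGroup Γ] (G : GammaRing M Γ)

theorem tri_neg_right (a : M) (α : Γ) (c : M) : G.tri a α (-c) = -G.tri a α c := by
  have h := G.add_right a α c (-c)
  rw [add_neg_cancel, G.tri_zero_right] at h
  exact eq_neg_of_add_eq_zero_right h.symm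

end GammaRing

private theorem gamma_comb1 {A : Type*} [AddCommGroup A] {a b x : A} (h1 : a = b)
    (key : x = a - b) : x = 0 := by
  rw [key, sub_eq_zero_of_eq h1]

private theorem gamma_comb2 {A : Type*} [AddCommGroup A] {a b c d x : A}
    (h1 : a = b) (h2 : c = d) (key : x = a - b + (c - d)) : x = 0 := by
  rw [key, sub_eq_zero_of_eq h1, sub_eq_zero_of_eq h2, add_zero]

private theorem gamma_comb3 {A : Type*} [AddCommGroup A] {a b c d e f x : A}
    (h1 : a = b) (h2 : c = d) (h3 : e = f)
    (key : x = a - b + (c - d) + (e - f)) : x = 0 := by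
  rw [key, sub_eq_zero_of_eq h1, sub_eq_zero_of_eq h2, sub_eq_zero_of_eq h3,
    add_zero, add_zero]

/-- In a semiprime Γ-ring with an scp derivation, `[x,y]_α α z = 0`. -/
theorem semiprime_scp_derivation_comm_annihilates {M Γ : Type*}
    [AddCommGroup M] [AddCommGroup Γ] (G : GammaRing M Γ) (hsp : G.IsSemiprime)
    (μ : M → M) (hμ : G.IsDerivation μ) (hscp : G.IsSCP μ) :
    ∀ (x y z : M) (α : Γ), G.tri (G.comm x α y) α z = 0 := by
  intro x y z α
  have hD := hμ.2
  -- L2 : dv·[du,u] + [du,v]·du = 0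
  have L2 : ∀ u v : M,
      G.tri (μ v) α (G.comm (μ u) α u) + G.tri (G.comm (μ u) α v) α (μ u) = 0 := by
    intro u v
    have e1 := hscp u α (G.tri v α u)
    have e2 := congrArg (fun t => G.tri t α u) (hscp u α v)
    simp only [GammaRing.comm, hD, G.add_left, G.add_right, G.tri_sub_left,
      G.tri_sub_right, G.tri_neg_left, G.tri_neg_right, G.tri_zero_left,
      G.tri_zero_right, G.assoc] at e1 e2 ⊢
    exact gamma_comb2 e1 e2.symm (by abel)
  -- L3 : dz'·(w·[du,u]) + [du,z']·(w·du) = 0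
  have L3 : ∀ u z' w : M,
      G.tri (μ z') α (G.tri w α (G.comm (μ u) α u)) +
        G.tri (G.comm (μ u) α z') α (G.tri w α (μ u)) = 0 := by
    intro u z' w
    have e1 := L2 u (G.tri z' α w)
    have e2 := congrArg (fun t => G.tri z' α t) (L2 u w)
    simp only [GammaRing.comm, hD, G.add_left, G.add_right, G.tri_sub_left,
      G.tri_sub_right, G.tri_neg_left, G.tri_neg_right, G.tri_zero_left,
      G.tri_zero_right, G.assoc] at e1 e2 ⊢
    exact gamma_comb2 e1 e2.symm (by abel)
  -- L4 : d²u·(w·[du,u]) = 0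
  have L4 : ∀ u w : M,
      G.tri (μ (μ u)) α (G.tri w α (G.comm (μ u) α u)) = 0 := by
    intro u w
    have e1 := L3 u (μ u) w
    simp only [GammaRing.comm, hD, G.add_left, G.add_right, G.tri_sub_left,
      G.tri_sub_right, G.tri_neg_left, G.tri_neg_right, G.tri_zero_left,
      G.tri_zero_right, G.assoc] at e1 ⊢
    exact gamma_comb1 e1 (by abel)
  -- L6 : d³u·(w·[du,u]) = 0
  have L6 : ∀ u w : M,
      G.tri (μ (μ (μ u))) α (G.tri w α (G.comm (μ u) α u)) = 0 := by
    intro u w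
    have e1 := L4 (μ u) w
    have e2 := congrArg (fun t => G.tri (μ (μ (μ u))) α (G.tri w α t)) (hscp (μ u) α u)
    simp only [GammaRing.comm, hD, G.add_left, G.add_right, G.tri_sub_left,
      G.tri_sub_right, G.tri_neg_left, G.tri_neg_right, G.tri_zero_left,
      G.tri_zero_right, G.assoc] at e1 e2 ⊢
    exact gamma_comb2 e2.symm e1 (by abel)
  -- L7a : [du,u]·(w·du) = 0
  have L7a : ∀ u w : M,
      G.tri (G.comm (μ u) α u) α (G.tri w α (μ u)) = 0 := by
    intro u w
    have e1 := L3 u (μ (μ u)) w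
    have e2 := L6 u w
    have e3 := congrArg (fun t => G.tri t α (G.tri w α (μ u))) (hscp (μ u) α u)
    simp only [GammaRing.comm, hD, G.add_left, G.add_right, G.tri_sub_left,
      G.tri_sub_right, G.tri_neg_left, G.tri_neg_right, G.tri_zero_left,
      G.tri_zero_right, G.assoc] at e1 e2 e3 ⊢
    exact gamma_comb3 e3.symm e1.symm e2 (by abel)
  -- L7b : du·(w·[du,u]) = 0
  have L7b : ∀ u w : M,
      G.tri (μ u) α (G.tri w α (G.comm (μ u) α u)) = 0 := by
    intro u w
    have e1 := L3 u u w
    have e2 := L7a u w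
    simp only [GammaRing.comm, hD, G.add_left, G.add_right, G.tri_sub_left,
      G.tri_sub_right, G.tri_neg_left, G.tri_neg_right, G.tri_zero_left,
      G.tri_zero_right, G.assoc] at e1 e2 ⊢
    exact gamma_comb2 e1 e2.symm (by abel)
  -- L8 : ([du,u] γ v) α [du,u] = 0  for all γ
  have L8 : ∀ (u : M) (γ : Γ) (v : M),
      G.tri (G.tri (G.comm (μ u) α u) γ v) α (G.comm (μ u) α u) = 0 := by
    intro u γ v
    have e0 := congrArg (fun t => G.tri (G.tri t γ v) α (G.comm (μ u) α u)) (hscp (μ u) α u)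
    have e1 := L4 u (G.tri (μ u) γ v)
    have e2 := L7b u (G.tri (μ (μ u)) γ v)
    simp only [GammaRing.comm, hD, G.add_left, G.add_right, G.tri_sub_left,
      G.tri_sub_right, G.tri_neg_left, G.tri_neg_right, G.tri_zero_left,
      G.tri_zero_right, G.assoc] at e0 e1 e2 ⊢
    exact gamma_comb3 e0.symm e1 e2.symm (by abel)
  -- L9 : d²p·w·[dq,q] = 0  (mixed variables), by semiprimeness
  have L9 : ∀ p q w : M,
      G.tri (G.tri (μ (μ p)) α w) α (G.comm (μ q) α q) = 0 := by
    intro p q w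
    refine hsp _ (fun γ m δ => ?_)
    rw [G.assoc (G.tri (μ (μ p)) α w) α (G.comm (μ q) α q) γ m,
      G.assoc (G.tri (μ (μ p)) α w) α (G.tri (G.comm (μ q) α q) γ m) δ _,
      ← G.assoc (G.tri (G.comm (μ q) α q) γ m) δ (G.tri (μ (μ p)) α w) α (G.comm (μ q) α q),
      G.assoc (G.comm (μ q) α q) γ m δ (G.tri (μ (μ p)) α w),
      L8 q γ (G.tri m δ (G.tri (μ (μ p)) α w)), G.tri_zero_right]
  -- L10 : [q,p]_α·(w·dq) = 0
  have L10 : ∀ p q w : M,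
      G.tri (G.comm q α p) α (G.tri w α (μ q)) = 0 := by
    intro p q w
    have e1 := L3 q (μ p) w
    have e2 := L9 p q w
    have e3 := congrArg (fun t => G.tri t α (G.tri w α (μ q))) (hscp q α p)
    simp only [GammaRing.comm, hD, G.add_left, G.add_right, G.tri_sub_left,
      G.tri_sub_right, G.tri_neg_left, G.tri_neg_right, G.tri_zero_left,
      G.tri_zero_right, G.assoc] at e1 e2 e3 ⊢
    exact gamma_comb3 e3.symm e1 e2.symm (by abel)
  -- L11 : ([x,y]_α α v) δ [x,y]_α = 0 for all δ
  have L11 : ∀ (v : M) (δ : Γ),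
      G.tri (G.tri (G.comm x α y) α v) δ (G.comm x α y) = 0 := by
    intro v δ
    have e0 := congrArg (fun t => G.tri (G.tri (G.comm x α y) α v) δ t) (hscp x α y)
    have e1 := L10 x y (G.tri v δ (μ x))
    have e2 := L10 y x (G.tri v δ (μ y))
    simp only [GammaRing.comm, hD, G.add_left, G.add_right, G.tri_sub_left,
      G.tri_sub_right, G.tri_neg_left, G.tri_neg_right, G.tri_zero_left,
      G.tri_zero_right, G.assoc] at e0 e1 e2 ⊢
    exact gamma_comb3 e0.symm e1.symm e2.symm (by abel)
  -- conclusion by semiprimeness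
  refine hsp _ (fun γ m δ => ?_)
  rw [G.assoc (G.comm x α y) α z γ m,
    ← G.assoc (G.tri (G.comm x α y) α (G.tri z γ m)) δ (G.comm x α y) α z,
    L11 (G.tri z γ m) δ, G.tri_zero_left]
end

section
/- Let M be a Γ-ring and σ: M → M a strong commutativity preserving endomorphism. Then (σ(x) − x) α [z, x]_α = 0 for all x, z ∈ M and α ∈ Γ. -/
/-- For an scp endomorphism `σ` of a Γ-ring, `(σ(x) − x) α [z,x]_α = 0`. -/
theorem scp_endomorphism_identity {M Γ : Type*}
    [AddCommGroup M] [AddCommGroup Γ] (G : GammaRing M Γ)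
    (σ : M → M) (hσ : G.IsEndomorphism σ) (hscp : G.IsSCP σ) :
    ∀ (x z : M) (α : Γ), G.tri (σ x - x) α (G.comm z α x) = 0 := by
  intro x z α
  have hzr : ∀ (a : M) (α : Γ), G.tri a α 0 = 0 := by
    intro a α
    have h := G.add_right a α 0 0
    simpa using h
  have hsubl : ∀ (a b : M) (α : Γ) (c : M),
      G.tri (a - b) α c = G.tri a α c - G.tri b α c := by
    intro a b α c
    have h := G.add_left (a - b) b α c
    rw [sub_add_cancel] at h
    exact eq_sub_of_add_eq h.symm
  have hnegr : ∀ (a : M) (α : Γ) (b : M), G.tri a α (-b) = -(G.tri a α b) := by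
    intro a α b
    have h := G.add_right a α b (-b)
    rw [add_neg_cancel, hzr] at h
    exact eq_neg_of_add_eq_zero_right h.symm
  have hsubr : ∀ (a : M) (α : Γ) (b c : M),
      G.tri a α (b - c) = G.tri a α b - G.tri a α c := by
    intro a α b c
    rw [sub_eq_add_neg, G.add_right, hnegr, sub_eq_add_neg]
  have key := hscp x α (G.tri x α z)
  unfold GammaRing.comm at key ⊢
  rw [hσ.2, G.assoc, G.assoc, ← hsubr, ← hsubr] at key
  have hc := hscp x α z
  unfold GammaRing.comm at hc
  rw [hc] at key
  have h0 : G.tri (σ x - x) α (G.tri x α z - G.tri z α x) = 0 := by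
    rw [hsubl, key, sub_self]
  calc G.tri (σ x - x) α (G.tri z α x - G.tri x α z)
      = G.tri (σ x - x) α (-(G.tri x α z - G.tri z α x)) := by rw [neg_sub]
    _ = -(G.tri (σ x - x) α (G.tri x α z - G.tri z α x)) := hnegr _ _ _
    _ = 0 := by rw [h0, neg_zero]
end
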